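/- Let ℳ be a right rigid monoidal category and t_X : X → X^∨∨ a family of isomorphisms (not assumed natural), with induced left duality data ẽv, c̃oev. Then t is a natural transformation Id ⇒ (·)^∨∨ if and only if for every morphism φ : X → Y the right transpose φ^∨ : Y^∨ → X^∨ (defined from ev_Y and coev_X) equals the left transpose ρ_{X^∨} ∘ (id_{X^∨} ⊗ ẽv_Y) ∘ α_{X^∨,Y,Y^∨} ∘ ((id_{X^∨} ⊗ φ) ⊗ id_{Y^∨}) ∘ (c̃oev_X ⊗ id_{Y^∨}) ∘ λ_{Y^∨}⁻¹ : Y^∨ → X^∨. -/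

import Mathlib

open CategoryTheory MonoidalCategory

universe v u

/-- A right duality structure on a monoidal category: every object `A` is assigned a dual
`A^∨` together with evaluation `ev_A : A^∨ ⊗ A → I` and coevaluation `coev_A : I → A ⊗ A^∨`
subject to the two Zorro moves. -/
structure RightRigidData (C : Type u) [Category.{v} C] [MonoidalCategory C] where
  dual : C → C
  ev : ∀ X : C, dual X ⊗ X ⟶ 𝟙_ C
  coev : ∀ X : C, 𝟙_ C ⟶ X ⊗ dual X
  zorro₁ : ∀ X : C,
    (λ_ X).inv ≫ (coev X ▷ X) ≫ (α_ X (dual X) X).hom ≫ (X ◁ ev X) ≫ (ρ_ X).hom = 𝟙 X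
  zorro₂ : ∀ X : C,
    (ρ_ (dual X)).inv ≫ (dual X ◁ coev X) ≫ (α_ (dual X) X (dual X)).inv ≫
      (ev X ▷ dual X) ≫ (λ_ (dual X)).hom = 𝟙 (dual X)

variable {C : Type u} [Category.{v} C] [MonoidalCategory C]

namespace RightRigidData

variable (D : RightRigidData C)

/-- The dual (right transpose) of a morphism,
`φ^∨ = λ ∘ (ev_Y ⊗ id) ∘ α⁻¹ ∘ (id ⊗ (φ ⊗ id)) ∘ (id ⊗ coev_X) ∘ ρ⁻¹`. -/
noncomputable def dualHom {X Y : C} (f : X ⟶ Y) : D.dual Y ⟶ D.dual X :=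
  (ρ_ (D.dual Y)).inv ≫ (D.dual Y ◁ D.coev X) ≫ (D.dual Y ◁ (f ▷ D.dual X)) ≫
    (α_ (D.dual Y) Y (D.dual X)).inv ≫ (D.ev Y ▷ D.dual X) ≫ (λ_ (D.dual X)).hom

/-- `ν⁰ = λ_{I^∨} ∘ coev_I : I → I^∨`. -/
noncomputable def nu0 : 𝟙_ C ⟶ D.dual (𝟙_ C) :=
  D.coev (𝟙_ C) ≫ (λ_ (D.dual (𝟙_ C))).hom

/-- The canonical morphism `ν²_{X,Y} : X^∨ ⊗ Y^∨ → (Y ⊗ X)^∨` built from the right duality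
data `ev_X`, `ev_Y` and `coev_{Y⊗X}`. -/
noncomputable def nu2 (X Y : C) : D.dual X ⊗ D.dual Y ⟶ D.dual (Y ⊗ X) :=
  (D.dual X ◁ (ρ_ (D.dual Y)).inv) ≫
  (D.dual X ◁ (D.dual Y ◁ D.coev (Y ⊗ X))) ≫
  (D.dual X ◁ (α_ (D.dual Y) (Y ⊗ X) (D.dual (Y ⊗ X))).inv) ≫
  (D.dual X ◁ ((α_ (D.dual Y) Y X).inv ▷ D.dual (Y ⊗ X))) ≫
  (D.dual X ◁ ((D.ev Y ▷ X) ▷ D.dual (Y ⊗ X))) ≫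
  (D.dual X ◁ ((λ_ X).hom ▷ D.dual (Y ⊗ X))) ≫
  (α_ (D.dual X) X (D.dual (Y ⊗ X))).inv ≫
  (D.ev X ▷ D.dual (Y ⊗ X)) ≫ (λ_ (D.dual (Y ⊗ X))).hom

/-- Left (tilded) evaluation `ẽv_X = ev_{X^∨} ∘ (t_X ⊗ id_{X^∨})` induced by a family of
isomorphisms `t_X : X ≅ X^∨∨`. -/
noncomputable def tev (t : ∀ X : C, X ≅ D.dual (D.dual X)) (X : C) : X ⊗ D.dual X ⟶ 𝟙_ C :=
  ((t X).hom ▷ D.dual X) ≫ D.ev (D.dual X)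

/-- Left (tilded) coevaluation `c̃oev_X = (id_{X^∨} ⊗ t_X⁻¹) ∘ coev_{X^∨}`. -/
noncomputable def tcoev (t : ∀ X : C, X ≅ D.dual (D.dual X)) (X : C) : 𝟙_ C ⟶ D.dual X ⊗ X :=
  D.coev (D.dual X) ≫ (D.dual X ◁ (t X).inv)

/-- A pivotal structure: a monoidal natural isomorphism `t : Id ⇒ (·)^∨∨`, where the
double-dual functor carries the canonical monoidal structure
`ω⁰ = ((ν⁰)⁻¹)^∨ ∘ ν⁰` and `ω²_{X,Y} = ((ν²_{Y,X})⁻¹)^∨ ∘ ν²_{X^∨,Y^∨}`.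
(The inverses of `ν⁰` and `ν²` are carried along as data with their defining equations.) -/
structure Pivotal (D : RightRigidData C) where
  t : ∀ X : C, X ≅ D.dual (D.dual X)
  naturality : ∀ {X Y : C} (f : X ⟶ Y),
    f ≫ (t Y).hom = (t X).hom ≫ D.dualHom (D.dualHom f)
  nu0Inv : D.dual (𝟙_ C) ⟶ 𝟙_ C
  nu0_comp : D.nu0 ≫ nu0Inv = 𝟙 _
  comp_nu0 : nu0Inv ≫ D.nu0 = 𝟙 _
  nu2Inv : ∀ X Y : C, D.dual (Y ⊗ X) ⟶ D.dual X ⊗ D.dual Y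
  nu2_comp : ∀ X Y : C, D.nu2 X Y ≫ nu2Inv X Y = 𝟙 _
  comp_nu2 : ∀ X Y : C, nu2Inv X Y ≫ D.nu2 X Y = 𝟙 _
  monoidal_unit : (t (𝟙_ C)).hom = D.nu0 ≫ D.dualHom nu0Inv
  monoidal_tensor : ∀ X Y : C,
    ((t X).hom ⊗ₘ (t Y).hom) ≫ D.nu2 (D.dual X) (D.dual Y) ≫ D.dualHom (nu2Inv Y X)
      = (t (X ⊗ Y)).hom

/-- Action of the defect `X` on bulk fields, the defect wrapped counterclockwise:
`𝒟_l(X)(φ) = ev_X ∘ (id_{X^∨} ⊗ (λ_X ∘ (φ ⊗ id_X) ∘ λ_X⁻¹)) ∘ c̃oev_X`. -/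
noncomputable def Dl (t : ∀ X : C, X ≅ D.dual (D.dual X)) (X : C) (φ : 𝟙_ C ⟶ 𝟙_ C) :
    𝟙_ C ⟶ 𝟙_ C :=
  D.tcoev t X ≫ (D.dual X ◁ ((λ_ X).inv ≫ (φ ▷ X) ≫ (λ_ X).hom)) ≫ D.ev X

/-- `𝒟_r(X)(φ) = ẽv_X ∘ ((ρ_X ∘ (id_X ⊗ φ) ∘ ρ_X⁻¹) ⊗ id_{X^∨}) ∘ coev_X`. -/
noncomputable def Dr (t : ∀ X : C, X ≅ D.dual (D.dual X)) (X : C) (φ : 𝟙_ C ⟶ 𝟙_ C) :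
    𝟙_ C ⟶ 𝟙_ C :=
  D.coev X ≫ (((ρ_ X).inv ≫ (X ◁ φ) ≫ (ρ_ X).hom) ▷ D.dual X) ≫ D.tev t X

end RightRigidData

open RightRigidData

/-- The left transpose of `φ : X → Y` with respect to the left duality data `ẽv`, `c̃oev`
induced by a family of isomorphisms `t_X : X → X^∨∨`:
`ρ_{X^∨} ∘ (id_{X^∨} ⊗ ẽv_Y) ∘ α ∘ ((id_{X^∨} ⊗ φ) ⊗ id_{Y^∨}) ∘ (c̃oev_X ⊗ id_{Y^∨}) ∘ λ⁻¹`. -/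
noncomputable def leftTranspose {C : Type u} [Category.{v} C] [MonoidalCategory C]
    (D : RightRigidData C) (t : ∀ X : C, X ≅ D.dual (D.dual X))
    {X Y : C} (φ : X ⟶ Y) : D.dual Y ⟶ D.dual X :=
  (λ_ (D.dual Y)).inv ≫ (D.tcoev t X ▷ D.dual Y) ≫
    ((D.dual X ◁ φ) ▷ D.dual Y) ≫ (α_ (D.dual X) Y (D.dual Y)).hom ≫
    (D.dual X ◁ D.tev t Y) ≫ (ρ_ (D.dual X)).hom

/-!
The right transpose `(X ⟶ Y) → (Y^∨ ⟶ X^∨)` is a bijection whose inverse is the left mate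
taken with respect to the pairings `(X, X^∨)`. Unfolding `ẽv` and `c̃oev`, the left transpose of
`φ` is the left mate of `t_X⁻¹ ≫ φ ≫ t_Y : X^∨∨ ⟶ Y^∨∨`. Hence `φ^∨` equals the left transpose
exactly when `φ^∨∨ = t_X⁻¹ ≫ φ ≫ t_Y`, i.e. when the naturality square of `t` at `φ` commutes.
-/

theorem leftAdjointMate_rightAdjointMate {X Y : C} [HasRightDual X] [HasRightDual Y]
    (f : X ⟶ Y) : (ᘁ(fᘁ)) = f := by
  dsimp only [leftDual_rightDual, leftAdjointMate]
  rw [← comp_whiskerRight_assoc, coevaluation_comp_rightAdjointMate, comp_whiskerRight_assoc]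
  calc
    _ = 𝟙 _ ⊗≫ η_ X (Xᘁ) ▷ X ⊗≫ (f ▷ ((Xᘁ : C) ⊗ X) ≫ Y ◁ ε_ X (Xᘁ)) ⊗≫ 𝟙 _ := by
      monoidal
    _ = 𝟙 X ⊗≫ (η_ X (Xᘁ) ▷ X ⊗≫ X ◁ ε_ X (Xᘁ)) ⊗≫ f := by
      rw [← whisker_exchange]; monoidal
    _ = f := by rw [ExactPairing.evaluation_coevaluation'']; monoidal

theorem rightAdjointMate_leftAdjointMate {X Y : C} [HasRightDual X] [HasRightDual Y]
    (g : Yᘁ ⟶ Xᘁ) : ((ᘁg)ᘁ) = g := by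
  dsimp only [leftDual_rightDual, rightAdjointMate]
  -- `coevaluation_comp_leftAdjointMate` with `ᘁ(Xᘁ)` and `ᘁ(Yᘁ)` unfolded to `X` and `Y`
  rw [← whiskerLeft_comp_assoc,
    show η_ X (Xᘁ) ≫ (ᘁg) ▷ (Xᘁ) = η_ Y (Yᘁ) ≫ Y ◁ g from coevaluation_comp_leftAdjointMate g,
    whiskerLeft_comp_assoc]
  calc
    _ = 𝟙 _ ⊗≫ (Yᘁ : C) ◁ η_ Y (Yᘁ) ⊗≫ (((Yᘁ : C) ⊗ Y) ◁ g ≫ ε_ Y (Yᘁ) ▷ (Xᘁ : C)) ⊗≫ 𝟙 _ := by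
      monoidal
    _ = 𝟙 _ ⊗≫ ((Yᘁ : C) ◁ η_ Y (Yᘁ) ⊗≫ ε_ Y (Yᘁ) ▷ (Yᘁ : C)) ⊗≫ g := by
      rw [whisker_exchange]; monoidal
    _ = g := by rw [ExactPairing.coevaluation_evaluation'']; monoidal

def rightAdjointMateEquiv (X Y : C) [HasRightDual X] [HasRightDual Y] :
    (X ⟶ Y) ≃ (Yᘁ ⟶ Xᘁ) where
  toFun f := fᘁ
  invFun g := ᘁg
  left_inv := leftAdjointMate_rightAdjointMate
  right_inv := rightAdjointMate_leftAdjointMate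

namespace RightRigidData

variable (D : RightRigidData C)

abbrev exactPairing (X : C) : ExactPairing X (D.dual X) where
  coevaluation' := D.coev X
  evaluation' := D.ev X
  coevaluation_evaluation' := by
    rw [← cancel_epi (ρ_ (D.dual X)).inv, ← cancel_mono (λ_ (D.dual X)).hom]
    simpa using D.zorro₂ X
  evaluation_coevaluation' := by
    rw [← cancel_epi (λ_ X).inv, ← cancel_mono (ρ_ X).hom]
    simpa using D.zorro₁ X

abbrev hasRightDual (X : C) : HasRightDual X :=
  @HasRightDual.mk _ _ _ X (D.dual X) (D.exactPairing X)

def dualHomEquiv (X Y : C) : (X ⟶ Y) ≃ (D.dual Y ⟶ D.dual X) :=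
  @rightAdjointMateEquiv _ _ _ X Y (D.hasRightDual X) (D.hasRightDual Y)

theorem dualHomEquiv_apply {X Y : C} (f : X ⟶ Y) : D.dualHomEquiv X Y f = D.dualHom f :=
  rfl

theorem leftTranspose_eq_dualHomEquiv_symm (t : ∀ X : C, X ≅ D.dual (D.dual X)) {X Y : C}
    (φ : X ⟶ Y) :
    leftTranspose D t φ =
      (D.dualHomEquiv (D.dual Y) (D.dual X)).symm ((t X).inv ≫ φ ≫ (t Y).hom) := by
  change _ = (λ_ _).inv ≫ (D.coev (D.dual X) ▷ _) ≫
    ((D.dual X ◁ ((t X).inv ≫ φ ≫ (t Y).hom)) ▷ _) ≫ (α_ _ _ _).hom ≫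
    (D.dual X ◁ D.ev (D.dual Y)) ≫ (ρ_ _).hom
  simp only [leftTranspose, tcoev, tev, whiskerLeft_comp, comp_whiskerRight, Category.assoc,
    associator_naturality_middle_assoc]

theorem dualHom_eq_leftTranspose_iff (t : ∀ X : C, X ≅ D.dual (D.dual X)) {X Y : C}
    (φ : X ⟶ Y) :
    D.dualHom φ = leftTranspose D t φ ↔ φ ≫ (t Y).hom = (t X).hom ≫ D.dualHom (D.dualHom φ) := by
  rw [leftTranspose_eq_dualHomEquiv_symm, Equiv.eq_symm_apply, dualHomEquiv_apply,
    Iso.eq_inv_comp, eq_comm]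

end RightRigidData

/-- **Statement 8.** Let `t_X : X → X^∨∨` be a family of isomorphisms in a right rigid
monoidal category.  Then `t` is a natural transformation `Id ⇒ (·)^∨∨` if and only if for
every morphism `φ : X → Y` the right transpose `φ^∨` coincides with the left transpose
built from the induced left duality data `ẽv`, `c̃oev`. -/
theorem statement8 {C : Type u} [Category.{v} C] [MonoidalCategory C]
    (D : RightRigidData C) (t : ∀ X : C, X ≅ D.dual (D.dual X)) :
    (∀ {X Y : C} (f : X ⟶ Y), f ≫ (t Y).hom = (t X).hom ≫ D.dualHom (D.dualHom f)) ↔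
    (∀ {X Y : C} (φ : X ⟶ Y), D.dualHom φ = leftTranspose D t φ) :=
  ⟨fun h _ _ φ => (D.dualHom_eq_leftTranspose_iff t φ).2 (h φ),
    fun h _ _ f => (D.dualHom_eq_leftTranspose_iff t f).1 (h f)⟩
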